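/- arXiv:1410.0024 — 7 statements merged into one kernel-verified Lean document; each statement's English description precedes it below -/
import Mathlib

section
/- Suppose ω satisfies Assumption (⋆). Then 𝒜_ω is closed under enlargement of sets: if I ∈ 𝒜_ω and I ⊆ J ⊆ {1,…,m}, then J ∈ 𝒜_ω. -/
/- Formalization of a statement from "The Crepant Transformation Conjecture
for Toric Complete Intersections" (Coates–Iritani–Jiang).

GIT data: `𝕃 = ℤ^r` (modelled by `Fin r → ℤ`), characters `D_1, …, D_m ∈ 𝕃^∨`
(modelled by `D : Fin m → Fin r → ℤ`, viewing `𝕃^∨ ⊗ ℝ` as `Fin r → ℝ`). -/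

open scoped Classical

noncomputable section

namespace CTC

/-- The image of the integral character `D i` in `𝕃^∨ ⊗ ℝ = ℝ^r`. -/
def DR {r m : ℕ} (D : Fin m → Fin r → ℤ) (i : Fin m) : Fin r → ℝ :=
  fun a => (D i a : ℝ)

/-- Integer pairing `v · e` between `𝕃^∨` and `𝕃`. -/
def pairZ {r : ℕ} (v e : Fin r → ℤ) : ℤ := ∑ a, v a * e a

/-- Real pairing `v · e` between `𝕃^∨ ⊗ ℝ` and `𝕃`. -/
def pairR {r : ℕ} (v : Fin r → ℝ) (e : Fin r → ℤ) : ℝ := ∑ a, v a * (e a : ℝ)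

/-- Rational pairing `D_i · f` between a character `D_i ∈ 𝕃^∨` and `f ∈ 𝕃 ⊗ ℚ`. -/
def dotDQ {r : ℕ} (Di : Fin r → ℤ) (f : Fin r → ℚ) : ℚ := ∑ a, (Di a : ℚ) * f a

/-- `∠_I := { Σ_{i ∈ I} a_i D_i : a_i ∈ ℝ, a_i > 0 }`; in particular `∠_∅ = {0}`. -/
def angleCone {m : ℕ} {E : Type*} [AddCommMonoid E] [Module ℝ E]
    (D : Fin m → E) (I : Finset (Fin m)) : Set E :=
  { w | ∃ a : Fin m → ℝ, (∀ i ∈ I, 0 < a i) ∧ w = ∑ i ∈ I, a i • D i }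

/-- The set of anticones `𝒜_ω := { I ⊆ {1,…,m} : ω ∈ ∠_I }`. -/
def anticones {r m : ℕ} (D : Fin m → Fin r → ℤ) (ω : Fin r → ℝ) :
    Set (Finset (Fin m)) :=
  { I | ω ∈ angleCone (DR D) I }

/-- The extended ample cone `C_ω := ⋂_{I ∈ 𝒜_ω} ∠_I`. -/
def extAmpleCone {r m : ℕ} (D : Fin m → Fin r → ℤ) (ω : Fin r → ℝ) :
    Set (Fin r → ℝ) :=
  ⋂ I ∈ anticones D ω, angleCone (DR D) I

/-- `U_ω := ⋃_{I ∈ 𝒜_ω} { z ∈ ℂ^m : z_i ≠ 0 for all i ∈ I }`. -/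
def Uset {r m : ℕ} (D : Fin m → Fin r → ℤ) (ω : Fin r → ℝ) : Set (Fin m → ℂ) :=
  ⋃ I ∈ anticones D ω, { z : Fin m → ℂ | ∀ i ∈ I, z i ≠ 0 }

/-- `S_ω := { i : {1,…,m} ∖ {i} ∉ 𝒜_ω }`. -/
def Sset {r m : ℕ} (D : Fin m → Fin r → ℤ) (ω : Fin r → ℝ) : Finset (Fin m) :=
  Finset.univ.filter fun i => Finset.univ.erase i ∉ anticones D ω

/-- Assumption (⋆): `{1,…,m} ∈ 𝒜_ω`, and for each `I ∈ 𝒜_ω` the set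
`{D_i : i ∈ I}` spans `𝕃^∨ ⊗ ℝ` over `ℝ`. -/
def AssumptionStar {r m : ℕ} (D : Fin m → Fin r → ℤ) (ω : Fin r → ℝ) : Prop :=
  Finset.univ ∈ anticones D ω ∧
    ∀ I ∈ anticones D ω, Submodule.span ℝ (DR D '' (I : Set (Fin m))) = ⊤

/- Since `{D_i : i ∈ I}` spans, `Σ_{j ∈ J ∖ I} D_j = Σ_{i ∈ I} c_i D_i` for some reals `c_i`.
Then `ω = Σ_{i ∈ I} a_i D_i = Σ_{i ∈ I} (a_i - ε c_i) D_i + Σ_{j ∈ J ∖ I} ε D_j`, and for small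
`ε > 0` all these coefficients are positive. -/

theorem exists_pos_forall_mul_lt {ι : Type*} (s : Finset ι) {a : ι → ℝ}
    (ha : ∀ i ∈ s, 0 < a i) (c : ι → ℝ) : ∃ ε > 0, ∀ i ∈ s, ε * c i < a i := by
  have hsmall : ∀ᶠ ε in nhdsWithin (0 : ℝ) (Set.Ioi 0), ∀ i ∈ s, ε * c i < a i :=
    (Filter.eventually_all_finset s).2 fun i hi =>
      (((continuous_mul_const (c i)).tendsto' 0 0 (zero_mul _)).mono_left
        nhdsWithin_le_nhds).eventually_lt_const (ha i hi)
  obtain ⟨ε, hlt, hpos⟩ := (hsmall.and self_mem_nhdsWithin).exists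
  exact ⟨ε, hpos, hlt⟩

theorem mem_angleCone_of_subset_of_sum_mem_span {m : ℕ} {E : Type*} [AddCommGroup E]
    [Module ℝ E] {D : Fin m → E} {I J : Finset (Fin m)} {ω : E} (hω : ω ∈ angleCone D I)
    (hIJ : I ⊆ J) (hspan : ∑ j ∈ J \ I, D j ∈ Submodule.span ℝ (D '' I)) :
    ω ∈ angleCone D J := by
  obtain ⟨a, ha, rfl⟩ := hω
  obtain ⟨c, hc⟩ := (Submodule.mem_span_image_finset_iff_exists_fun' ℝ).1 hspan
  obtain ⟨ε, hε, hlt⟩ := exists_pos_forall_mul_lt I ha c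
  set b : Fin m → ℝ := fun i => if i ∈ I then a i - ε * c i else ε
  refine ⟨b, fun i _ => ?_, ?_⟩
  · by_cases hi : i ∈ I
    · simpa [b, hi] using hlt i hi
    · simpa [b, hi] using hε
  have hnew : ∑ j ∈ J \ I, b j • D j = ε • ∑ i ∈ I, c i • D i := by
    rw [hc, Finset.smul_sum]
    exact Finset.sum_congr rfl fun j hj => by simp [b, (Finset.mem_sdiff.1 hj).2]
  have hold : ∑ i ∈ I, b i • D i = ∑ i ∈ I, a i • D i - ε • ∑ i ∈ I, c i • D i := by
    rw [Finset.smul_sum, ← Finset.sum_sub_distrib]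
    exact Finset.sum_congr rfl fun i hi => by simp [b, hi, sub_smul, mul_smul]
  rw [← Finset.sum_sdiff hIJ, hnew, hold, add_sub_cancel]

theorem anticones_closed_under_enlargement_general
    {r m : ℕ}
    (D : Fin m → Fin r → ℤ) (ω : Fin r → ℝ)
    (hstar : AssumptionStar D ω)
    (I J : Finset (Fin m)) (hI : I ∈ anticones D ω) (hIJ : I ⊆ J) :
    J ∈ anticones D ω :=
  mem_angleCone_of_subset_of_sum_mem_span hI hIJ (by rw [hstar.2 I hI]; trivial)

/-- Under Assumption (⋆), the set of anticones `𝒜_ω` is closed under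
enlargement: if `I ∈ 𝒜_ω` and `I ⊆ J ⊆ {1,…,m}`, then `J ∈ 𝒜_ω`. -/
theorem anticones_closed_under_enlargement
    {r m : ℕ} (hr : 0 < r) (hrm : r ≤ m)
    (D : Fin m → Fin r → ℤ) (ω : Fin r → ℝ)
    (hstar : AssumptionStar D ω)
    (I J : Finset (Fin m)) (hI : I ∈ anticones D ω) (hIJ : I ⊆ J) :
    J ∈ anticones D ω :=
  anticones_closed_under_enlargement_general D ω hstar I J hI hIJ

end CTC
end
end

section
/- In the wall-crossing setup: (a) if i ∈ S_+ ∩ S_-, ξ⁺ is an i-th splitting vector for ω_+, and ξ⁻ is an i-th splitting vector for ω_-, then v·ξ⁺ = v·ξ⁻ for every v ∈ W; (b) if i ∈ S_+ ∖ S_- and ξ⁺ is an i-th splitting vector for ω_+, then v·ξ⁺ = 0 for every v ∈ W, and the same holds with the roles of + and − exchanged. -/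
/- Formalization of a statement from "The Crepant Transformation Conjecture
for Toric Complete Intersections" (Coates–Iritani–Jiang).

GIT data: `𝕃 = ℤ^r` (modelled by `Fin r → ℤ`), characters `D_1, …, D_m ∈ 𝕃^∨`
(modelled by `D : Fin m → Fin r → ℤ`, viewing `𝕃^∨ ⊗ ℝ` as `Fin r → ℝ`). -/

open scoped Classical

noncomputable section

namespace CTC

/-- The wall `W = { v ∈ 𝕃^∨ ⊗ ℝ : v · e = 0 }`. -/
def wall {r : ℕ} (e : Fin r → ℤ) : Set (Fin r → ℝ) := { v | pairR v e = 0 }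

/-- `M_+ := { i : D_i · e > 0 }`. -/
def Mplus {r m : ℕ} (D : Fin m → Fin r → ℤ) (e : Fin r → ℤ) : Finset (Fin m) :=
  Finset.univ.filter fun i => 0 < pairZ (D i) e

/-- `M_- := { i : D_i · e < 0 }`. -/
def Mminus {r m : ℕ} (D : Fin m → Fin r → ℤ) (e : Fin r → ℤ) : Finset (Fin m) :=
  Finset.univ.filter fun i => pairZ (D i) e < 0

/-- `M_0 := { i : D_i · e = 0 }`. -/
def Mzero {r m : ℕ} (D : Fin m → Fin r → ℤ) (e : Fin r → ℤ) : Finset (Fin m) :=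
  Finset.univ.filter fun i => pairZ (D i) e = 0

/-- The wall-crossing setup of §5.1 of the paper: two stability conditions
`ω_+`, `ω_-` satisfying Assumption (⋆) whose chambers are separated by the
wall `W = e^⊥`, satisfying the crepancy condition `Σ_i D_i · e = 0`, together
with a stability condition `ω₀` in the relative interior of the common facet
`W ∩ closure C_+ = W ∩ closure C_-` (which spans the hyperplane `W`). -/
structure WallCrossingSetup (r m : ℕ) where
  D : Fin m → Fin r → ℤ
  ωp : Fin r → ℝ
  ωm : Fin r → ℝ
  ω₀ : Fin r → ℝ
  e : Fin r → ℤ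
  hr : 0 < r
  hrm : r ≤ m
  starP : AssumptionStar D ωp
  starM : AssumptionStar D ωm
  he : e ≠ 0
  posP : ∀ v ∈ extAmpleCone D ωp, 0 < pairR v e
  negM : ∀ v ∈ extAmpleCone D ωm, pairR v e < 0
  crepant : (∑ i, pairZ (D i) e) = 0
  wallEq : wall e ∩ closure (extAmpleCone D ωp)
      = wall e ∩ closure (extAmpleCone D ωm)
  wallSpanEq : Submodule.span ℝ (wall e ∩ closure (extAmpleCone D ωp))
      = Submodule.span ℝ (wall e)
  interior₀ : ω₀ ∈ intrinsicInterior ℝ (wall e ∩ closure (extAmpleCone D ωp))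

/-- `ξ ∈ 𝕃 ⊗ ℚ` is an `i`-th splitting vector for `ω`:
`D_i · ξ = 1`, `D_k · ξ ≤ 0` for `k ≠ i`, and `{ k : D_k · ξ ≥ 0 } ∈ 𝒜_ω`. -/
def IsSplittingVector {r m : ℕ} (D : Fin m → Fin r → ℤ) (ω : Fin r → ℝ)
    (i : Fin m) (ξ : Fin r → ℚ) : Prop :=
  dotDQ (D i) ξ = 1 ∧ (∀ k : Fin m, k ≠ i → dotDQ (D k) ξ ≤ 0) ∧
    (Finset.univ.filter fun k => 0 ≤ dotDQ (D k) ξ) ∈ anticones D ω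

/-- Pairing of `v ∈ 𝕃^∨ ⊗ ℝ` with `ξ ∈ 𝕃 ⊗ ℚ`. -/
def pairRQ {r : ℕ} (v : Fin r → ℝ) (ξ : Fin r → ℚ) : ℝ := ∑ a, v a * (ξ a : ℝ)

/-! An inequality between pairings with splitting vectors that holds on the generators `D_k`
of an anticone `I ∈ 𝒜_ω` holds on `∠_I ⊇ C_ω` and, by continuity, on `closure C_ω`.
Comparing `ξ^+` with `ξ^-` (or `ξ^±` with `0`) this way gives opposite inequalities on
`closure C_+` and `closure C_-`, hence equality on their common facet, which spans `W`. -/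

def pairRQLinear {r : ℕ} (ξ : Fin r → ℚ) : (Fin r → ℝ) →ₗ[ℝ] ℝ where
  toFun v := pairRQ v ξ
  map_add' u v := by simp [pairRQ, add_mul, Finset.sum_add_distrib]
  map_smul' c v := by simp [pairRQ, Finset.mul_sum, mul_assoc]

lemma pairRQLinear_DR {r m : ℕ} (D : Fin m → Fin r → ℤ) (k : Fin m) (ξ : Fin r → ℚ) :
    pairRQLinear ξ (DR D k) = ((dotDQ (D k) ξ : ℚ) : ℝ) := by
  simp only [pairRQLinear, LinearMap.coe_mk, AddHom.coe_mk, pairRQ, DR, dotDQ]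
  push_cast
  ring

lemma le_on_angleCone {m : ℕ} {E : Type*} [AddCommMonoid E] [Module ℝ E]
    {D : Fin m → E} {I : Finset (Fin m)} {L L' : E →ₗ[ℝ] ℝ}
    (h : ∀ k ∈ I, L (D k) ≤ L' (D k)) : ∀ v ∈ angleCone D I, L v ≤ L' v := by
  rintro _ ⟨a, ha, rfl⟩
  simp only [map_sum, map_smul, smul_eq_mul]
  exact Finset.sum_le_sum fun k hk => mul_le_mul_of_nonneg_left (h k hk) (ha k hk).le

lemma le_on_closure_extAmpleCone {r m : ℕ} {D : Fin m → Fin r → ℤ} {ω : Fin r → ℝ}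
    {I : Finset (Fin m)} (hI : I ∈ anticones D ω) {L L' : (Fin r → ℝ) →ₗ[ℝ] ℝ}
    (h : ∀ k ∈ I, L (DR D k) ≤ L' (DR D k)) :
    ∀ v ∈ closure (extAmpleCone D ω), L v ≤ L' v :=
  closure_minimal (fun _ hv => le_on_angleCone h _ (Set.biInter_subset_of_mem hI hv))
    (isClosed_le L.continuous_of_finiteDimensional L'.continuous_of_finiteDimensional)

lemma erase_mem_anticones_of_not_mem_Sset {r m : ℕ} {D : Fin m → Fin r → ℤ}
    {ω : Fin r → ℝ} {i : Fin m} (hi : i ∉ Sset D ω) :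
    Finset.univ.erase i ∈ anticones D ω := by
  simpa [Sset] using hi

namespace IsSplittingVector

variable {r m : ℕ} {D : Fin m → Fin r → ℤ} {ω ω' : Fin r → ℝ} {i : Fin m}
  {ξ ξ' : Fin r → ℚ}

lemma dotDQ_le_of_nonneg (hξ : IsSplittingVector D ω i ξ)
    (hξ' : IsSplittingVector D ω' i ξ') {k : Fin m} (hk : 0 ≤ dotDQ (D k) ξ) :
    dotDQ (D k) ξ' ≤ dotDQ (D k) ξ := by
  by_cases hki : k = i
  · subst hki
    rw [hξ.1, hξ'.1]
  · exact (hξ'.2.1 k hki).trans hk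

lemma pairRQLinear_le_on_closure (hξ : IsSplittingVector D ω i ξ)
    (hξ' : IsSplittingVector D ω' i ξ') :
    ∀ v ∈ closure (extAmpleCone D ω), pairRQLinear ξ' v ≤ pairRQLinear ξ v :=
  le_on_closure_extAmpleCone hξ.2.2 fun k hk => by
    simp only [pairRQLinear_DR]
    exact_mod_cast hξ.dotDQ_le_of_nonneg hξ' (Finset.mem_filter.mp hk).2

lemma pairRQLinear_nonneg_on_closure (hξ : IsSplittingVector D ω i ξ) :
    ∀ v ∈ closure (extAmpleCone D ω), 0 ≤ pairRQLinear ξ v :=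
  le_on_closure_extAmpleCone (L := 0) hξ.2.2 fun k hk => by
    simp only [LinearMap.zero_apply, pairRQLinear_DR]
    exact_mod_cast (Finset.mem_filter.mp hk).2

lemma pairRQLinear_nonpos_on_closure (hξ : IsSplittingVector D ω i ξ)
    (hi : i ∉ Sset D ω') :
    ∀ v ∈ closure (extAmpleCone D ω'), pairRQLinear ξ v ≤ 0 :=
  le_on_closure_extAmpleCone (L' := 0) (erase_mem_anticones_of_not_mem_Sset hi)
    fun k hk => by
      simp only [LinearMap.zero_apply, pairRQLinear_DR]
      exact_mod_cast hξ.2.1 k (Finset.ne_of_mem_erase hk)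

end IsSplittingVector

lemma WallCrossingSetup.eq_on_wall {r m : ℕ} (W : WallCrossingSetup r m)
    {L L' : (Fin r → ℝ) →ₗ[ℝ] ℝ}
    (hp : ∀ v ∈ closure (extAmpleCone W.D W.ωp), L' v ≤ L v)
    (hm : ∀ v ∈ closure (extAmpleCone W.D W.ωm), L v ≤ L' v) :
    ∀ v ∈ wall W.e, L v = L' v := by
  have hfacet : wall W.e ∩ closure (extAmpleCone W.D W.ωp)
      ⊆ (LinearMap.ker (L - L') : Set (Fin r → ℝ)) := by
    intro u hu
    have hu' : u ∈ wall W.e ∩ closure (extAmpleCone W.D W.ωm) := W.wallEq ▸ hu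
    rw [SetLike.mem_coe, LinearMap.mem_ker, LinearMap.sub_apply, sub_eq_zero]
    exact le_antisymm (hm u hu'.2) (hp u hu.2)
  have hspan : Submodule.span ℝ (wall W.e) ≤ LinearMap.ker (L - L') :=
    W.wallSpanEq ▸ Submodule.span_le.mpr hfacet
  intro v hv
  exact sub_eq_zero.mp (hspan (Submodule.subset_span hv))

/-- Proposition 5.6 of the paper: (a) for `i ∈ S_+ ∩ S_-`, the splitting
vectors `ξ_i^+` and `ξ_i^-` have the same restriction to the wall `W`;
(b) for `i ∈ S_± ∖ S_∓`, the splitting vector `ξ_i^±` restricts to zero on `W`. -/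
theorem splitting_vectors_on_wall {r m : ℕ} (W : WallCrossingSetup r m) :
    (∀ i ∈ Sset W.D W.ωp ∩ Sset W.D W.ωm, ∀ ξp ξm : Fin r → ℚ,
        IsSplittingVector W.D W.ωp i ξp → IsSplittingVector W.D W.ωm i ξm →
        ∀ v ∈ wall W.e, pairRQ v ξp = pairRQ v ξm) ∧
    (∀ i ∈ Sset W.D W.ωp, i ∉ Sset W.D W.ωm →
        ∀ ξp : Fin r → ℚ, IsSplittingVector W.D W.ωp i ξp →
        ∀ v ∈ wall W.e, pairRQ v ξp = 0) ∧
    (∀ i ∈ Sset W.D W.ωm, i ∉ Sset W.D W.ωp →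
        ∀ ξm : Fin r → ℚ, IsSplittingVector W.D W.ωm i ξm →
        ∀ v ∈ wall W.e, pairRQ v ξm = 0) := by
  refine ⟨?_, ?_, ?_⟩
  · intro i _ ξp ξm hp hm
    exact W.eq_on_wall (hp.pairRQLinear_le_on_closure hm) (hm.pairRQLinear_le_on_closure hp)
  · intro i _ hi ξp hp
    exact W.eq_on_wall (L' := 0) hp.pairRQLinear_nonneg_on_closure
      (hp.pairRQLinear_nonpos_on_closure hi)
  · intro i _ hi ξm hm v hv
    exact (W.eq_on_wall (L := 0) (hm.pairRQLinear_nonpos_on_closure hi)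
      hm.pairRQLinear_nonneg_on_closure v hv).symm

end CTC
end
end

section
/- Suppose ω satisfies Assumption (⋆). Set 𝕂 := {f ∈ 𝕃⊗ℚ : {i : D_i·f ∈ ℤ} ∈ 𝒜_ω}, let 𝕃̃ ⊆ 𝕃⊗ℚ be the ℤ-submodule generated by 𝕂, and 𝕃̃^∨ := {v ∈ 𝕃^∨⊗ℚ : v·f ∈ ℤ for all f ∈ 𝕃̃}. Then: (a) D_j ∈ 𝕃̃^∨ for every j ∈ S_ω; (b) if for each j ∈ S_ω a j-th splitting vector ξ_j for ω is given, then every v ∈ 𝕃̃^∨ can be written uniquely as v = w + Σ_{j∈S_ω} n_j D_j with all n_j ∈ ℤ and with w ∈ 𝕃̃^∨ satisfying w·ξ_j = 0 for all j ∈ S_ω; moreover necessarily n_j = v·ξ_j. -/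
/- Formalization of a statement from "The Crepant Transformation Conjecture
for Toric Complete Intersections" (Coates–Iritani–Jiang).

GIT data: `𝕃 = ℤ^r` (modelled by `Fin r → ℤ`), characters `D_1, …, D_m ∈ 𝕃^∨`
(modelled by `D : Fin m → Fin r → ℤ`, viewing `𝕃^∨ ⊗ ℝ` as `Fin r → ℝ`). -/

open scoped Classical

noncomputable section

namespace CTC

/-- `𝕂_ω := { f ∈ 𝕃 ⊗ ℚ : { i : D_i · f ∈ ℤ } ∈ 𝒜_ω }`. -/
def Kset {r m : ℕ} (D : Fin m → Fin r → ℤ) (ω : Fin r → ℝ) : Set (Fin r → ℚ) :=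
  { f | (Finset.univ.filter fun i => ∃ n : ℤ, dotDQ (D i) f = (n : ℚ)) ∈ anticones D ω }

/-- Rational pairing between `𝕃^∨ ⊗ ℚ` and `𝕃 ⊗ ℚ`. -/
def dotQQ {r : ℕ} (v f : Fin r → ℚ) : ℚ := ∑ a, v a * f a

/-- The image of `D j` in `𝕃^∨ ⊗ ℚ`. -/
def DQcast {r m : ℕ} (D : Fin m → Fin r → ℤ) (j : Fin m) : Fin r → ℚ :=
  fun a => (D j a : ℚ)

/-- `𝕃̃ ⊆ 𝕃 ⊗ ℚ`: the `ℤ`-submodule generated by `𝕂`. -/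
def LtildeSub {r m : ℕ} (D : Fin m → Fin r → ℤ) (ω : Fin r → ℝ) :
    Submodule ℤ (Fin r → ℚ) :=
  Submodule.span ℤ (Kset D ω)

/-- `𝕃̃^∨ := { v ∈ 𝕃^∨ ⊗ ℚ : v · f ∈ ℤ for all f ∈ 𝕃̃ }`. -/
def LtildeDual {r m : ℕ} (D : Fin m → Fin r → ℤ) (ω : Fin r → ℝ) :
    Set (Fin r → ℚ) :=
  { v | ∀ f ∈ LtildeSub D ω, ∃ n : ℤ, dotQQ v f = (n : ℚ) }

/-- The decomposition property: `v = w + Σ_{j ∈ S_ω} n_j D_j` with `n_j ∈ ℤ`,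
`w ∈ 𝕃̃^∨` and `w · ξ_j = 0` for all `j ∈ S_ω`. -/
def GoodDecomp {r m : ℕ} (D : Fin m → Fin r → ℤ) (ω : Fin r → ℝ)
    (ξ : Fin m → Fin r → ℚ) (v w : Fin r → ℚ) (n : Fin m → ℤ) : Prop :=
  w ∈ LtildeDual D ω ∧ (∀ j ∈ Sset D ω, dotQQ w (ξ j) = 0) ∧
    v = w + ∑ j ∈ Sset D ω, (n j : ℚ) • DQcast D j

/-! Under (⋆) every superset of an anticone is an anticone: a new generator `D_j` is a real
combination of the old ones, so a small positive multiple of it can be traded against their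
positive coefficients. Hence each `j ∈ S_ω` lies in every anticone, which gives `D_j · f ∈ ℤ`
for `f ∈ 𝕂`, i.e. (a), and `D_j · ξ_k = δ_{jk}` for `j, k ∈ S_ω` (`≤ 0` by the definition of
`ξ_k`, `≥ 0` because `j` lies in the anticone `{l : D_l · ξ_k ≥ 0}`). Since `ξ_k ∈ 𝕂`, pairing a
decomposition with `ξ_k` forces `n_k = v · ξ_k ∈ ℤ`, and `w := v - Σ_j (v · ξ_j) D_j` works. -/

open Topology in
lemma angleCone_insert_of_mem_span {m : ℕ} {E : Type*} [AddCommGroup E] [Module ℝ E]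
    {v : Fin m → E} {I : Finset (Fin m)} {ω : E} (hω : ω ∈ angleCone v I) {j : Fin m}
    (hj : v j ∈ Submodule.span ℝ (v '' I)) : ω ∈ angleCone v (insert j I) := by
  by_cases hjI : j ∈ I
  · rwa [Finset.insert_eq_of_mem hjI]
  obtain ⟨a, ha, rfl⟩ := hω
  obtain ⟨c, hc, hcj⟩ := Finsupp.mem_span_image_iff_linearCombination ℝ |>.mp hj
  rw [Finsupp.linearCombination_apply_of_mem_supported ℝ hc] at hcj
  have hsmall : ∀ᶠ ε in 𝓝[>] (0 : ℝ), ∀ i ∈ I, ε * c i < a i := by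
    refine (Filter.eventually_all_finset I).2 fun i hi => nhdsWithin_le_nhds ?_
    have hcont : Filter.Tendsto (fun ε : ℝ => ε * c i) (𝓝 0) (𝓝 0) := by
      simpa using (continuous_mul_const (c i)).tendsto 0
    exact hcont.eventually (gt_mem_nhds (ha i hi))
  obtain ⟨ε, hε, hεpos⟩ := (hsmall.and self_mem_nhdsWithin).exists
  refine ⟨fun k => if k = j then ε else a k - ε * c k, ?_, ?_⟩
  · intro k hk
    rcases Finset.mem_insert.mp hk with rfl | hk
    · simpa using hεpos
    · simpa [ne_of_mem_of_not_mem hk hjI] using hε k hk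
  · have hI : ∀ i ∈ I, (if i = j then ε else a i - ε * c i) • v i
        = a i • v i - ε • (c i • v i) := fun i hi => by
      rw [if_neg (ne_of_mem_of_not_mem hi hjI), sub_smul, smul_smul]
    simp only [Finset.sum_insert hjI, if_true]
    rw [Finset.sum_congr rfl hI, Finset.sum_sub_distrib,
      ← Finset.smul_sum, hcj, add_sub_cancel]

section Anticones

variable {r m : ℕ} {D : Fin m → Fin r → ℤ} {ω : Fin r → ℝ}

lemma AssumptionStar.insert_mem_anticones (hstar : AssumptionStar D ω)
    {I : Finset (Fin m)} (hI : I ∈ anticones D ω) (j : Fin m) :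
    insert j I ∈ anticones D ω :=
  angleCone_insert_of_mem_span hI (by rw [hstar.2 I hI]; trivial)

lemma AssumptionStar.mem_anticones_of_subset (hstar : AssumptionStar D ω)
    {I J : Finset (Fin m)} (hI : I ∈ anticones D ω) (hIJ : I ⊆ J) : J ∈ anticones D ω := by
  have hunion : ∀ s : Finset (Fin m), I ∪ s ∈ anticones D ω := fun s => by
    induction s using Finset.induction_on with
    | empty => simpa using hI
    | insert j s _ ih => rw [Finset.union_insert]; exact hstar.insert_mem_anticones ih j
  simpa [Finset.union_eq_right.mpr hIJ] using hunion J

lemma AssumptionStar.mem_of_mem_Sset (hstar : AssumptionStar D ω) {j : Fin m}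
    (hj : j ∈ Sset D ω) {I : Finset (Fin m)} (hI : I ∈ anticones D ω) : j ∈ I := by
  by_contra hjI
  refine (Finset.mem_filter.mp hj).2 (hstar.mem_anticones_of_subset hI fun k hk => ?_)
  exact Finset.mem_erase.mpr ⟨ne_of_mem_of_not_mem hk hjI, Finset.mem_univ k⟩

end Anticones

section Lattice

variable {r m : ℕ} {D : Fin m → Fin r → ℤ} {ω : Fin r → ℝ}

lemma dotQQ_eq_dotProduct (v f : Fin r → ℚ) : dotQQ v f = v ⬝ᵥ f := rfl

lemma dotDQ_eq_dotProduct (j : Fin m) (f : Fin r → ℚ) : dotDQ (D j) f = DQcast D j ⬝ᵥ f := rfl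

variable (D ω) in
def ltildeDualAddSubgroup : AddSubgroup (Fin r → ℚ) where
  carrier := LtildeDual D ω
  zero_mem' _ _ := ⟨0, by simp [dotQQ_eq_dotProduct]⟩
  add_mem' {v u} hv hu f hf := by
    obtain ⟨p, hp⟩ := hv f hf
    obtain ⟨q, hq⟩ := hu f hf
    exact ⟨p + q, by simp_all [dotQQ_eq_dotProduct, add_dotProduct]⟩
  neg_mem' {v} hv f hf := by
    obtain ⟨p, hp⟩ := hv f hf
    exact ⟨-p, by simp_all [dotQQ_eq_dotProduct]⟩

lemma mem_LtildeDual_of_forall_mem_Kset {v : Fin r → ℚ}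
    (h : ∀ f ∈ Kset D ω, ∃ n : ℤ, dotQQ v f = n) : v ∈ LtildeDual D ω := by
  intro f hf
  induction hf using Submodule.span_induction with
  | mem f hf => exact h f hf
  | zero => exact ⟨0, by simp [dotQQ_eq_dotProduct]⟩
  | add f g _ _ hf hg =>
    obtain ⟨p, hp⟩ := hf
    obtain ⟨q, hq⟩ := hg
    exact ⟨p + q, by simp_all [dotQQ_eq_dotProduct, dotProduct_add]⟩
  | smul z f _ hf =>
    obtain ⟨p, hp⟩ := hf
    exact ⟨z * p, by rw [dotQQ_eq_dotProduct, dotProduct_smul, ← dotQQ_eq_dotProduct, hp,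
      zsmul_eq_mul, Int.cast_mul]⟩

lemma AssumptionStar.DQcast_mem_LtildeDual (hstar : AssumptionStar D ω) {j : Fin m}
    (hj : j ∈ Sset D ω) : DQcast D j ∈ LtildeDual D ω :=
  mem_LtildeDual_of_forall_mem_Kset fun _ hf =>
    (Finset.mem_filter.mp (hstar.mem_of_mem_Sset hj hf)).2

lemma AssumptionStar.sum_Sset_mem_LtildeDual (hstar : AssumptionStar D ω) (n : Fin m → ℤ) :
    ∑ j ∈ Sset D ω, (n j : ℚ) • DQcast D j ∈ LtildeDual D ω := by
  simp only [Int.cast_smul_eq_zsmul]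
  exact (ltildeDualAddSubgroup D ω).sum_mem fun j hj =>
    (ltildeDualAddSubgroup D ω).zsmul_mem (hstar.DQcast_mem_LtildeDual hj) (n j)

lemma AssumptionStar.mem_Kset_of_isSplittingVector (hstar : AssumptionStar D ω) {j : Fin m}
    {ξ : Fin r → ℚ} (hξ : IsSplittingVector D ω j ξ) : ξ ∈ Kset D ω := by
  obtain ⟨hj, hneg, hnonneg⟩ := hξ
  refine hstar.mem_anticones_of_subset hnonneg fun k hk => ?_
  rw [Finset.mem_filter] at hk ⊢
  refine ⟨Finset.mem_univ k, ?_⟩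
  by_cases hkj : k = j
  · exact ⟨1, by rw [hkj, hj, Int.cast_one]⟩
  · exact ⟨0, by rw [le_antisymm (hneg k hkj) hk.2, Int.cast_zero]⟩

lemma AssumptionStar.dotDQ_of_isSplittingVector (hstar : AssumptionStar D ω) {j k : Fin m}
    (hk : k ∈ Sset D ω) {ξ : Fin r → ℚ} (hξ : IsSplittingVector D ω j ξ) :
    dotDQ (D k) ξ = if k = j then 1 else 0 := by
  obtain ⟨hj, hneg, hnonneg⟩ := hξ
  split_ifs with hkj
  · rw [hkj, hj]
  · exact le_antisymm (hneg k hkj) (Finset.mem_filter.mp (hstar.mem_of_mem_Sset hk hnonneg)).2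

lemma AssumptionStar.dotQQ_sum_Sset_splittingVector (hstar : AssumptionStar D ω)
    {ξ : Fin m → Fin r → ℚ} (hξ : ∀ j ∈ Sset D ω, IsSplittingVector D ω j (ξ j))
    (n : Fin m → ℤ) {k : Fin m} (hk : k ∈ Sset D ω) :
    dotQQ (∑ j ∈ Sset D ω, (n j : ℚ) • DQcast D j) (ξ k) = n k := by
  rw [dotQQ_eq_dotProduct, sum_dotProduct]
  simp_rw [smul_dotProduct, ← dotDQ_eq_dotProduct]
  rw [Finset.sum_congr rfl fun j hj => by rw [hstar.dotDQ_of_isSplittingVector hj (hξ k hk)]]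
  simp [hk]

lemma GoodDecomp.coeff_eq (hstar : AssumptionStar D ω) {ξ : Fin m → Fin r → ℚ}
    (hξ : ∀ j ∈ Sset D ω, IsSplittingVector D ω j (ξ j)) {v w : Fin r → ℚ} {n : Fin m → ℤ}
    (h : GoodDecomp D ω ξ v w n) {j : Fin m} (hj : j ∈ Sset D ω) :
    (n j : ℚ) = dotQQ v (ξ j) := by
  obtain ⟨-, hw, rfl⟩ := h
  rw [dotQQ_eq_dotProduct, add_dotProduct, ← dotQQ_eq_dotProduct, ← dotQQ_eq_dotProduct, hw j hj,
    hstar.dotQQ_sum_Sset_splittingVector hξ n hj, zero_add]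

lemma AssumptionStar.exists_goodDecomp (hstar : AssumptionStar D ω) {ξ : Fin m → Fin r → ℚ}
    (hξ : ∀ j ∈ Sset D ω, IsSplittingVector D ω j (ξ j)) {v : Fin r → ℚ}
    (hv : v ∈ LtildeDual D ω) : ∃ w n, GoodDecomp D ω ξ v w n := by
  have hint : ∀ j ∈ Sset D ω, ∃ q : ℤ, dotQQ v (ξ j) = q := fun j hj =>
    hv (ξ j) (Submodule.subset_span (hstar.mem_Kset_of_isSplittingVector (hξ j hj)))
  choose! n hn using hint
  refine ⟨v - ∑ j ∈ Sset D ω, (n j : ℚ) • DQcast D j, n,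
    (ltildeDualAddSubgroup D ω).sub_mem hv (hstar.sum_Sset_mem_LtildeDual n), fun j hj => ?_,
    (sub_add_cancel _ _).symm⟩
  rw [dotQQ_eq_dotProduct, sub_dotProduct, ← dotQQ_eq_dotProduct, ← dotQQ_eq_dotProduct, hn j hj,
    hstar.dotQQ_sum_Sset_splittingVector hξ n hj, sub_self]

end Lattice

theorem lattice_decomposition_general {r m : ℕ}
    (D : Fin m → Fin r → ℤ) (ω : Fin r → ℝ) (hstar : AssumptionStar D ω)
    (ξ : Fin m → Fin r → ℚ)
    (hξ : ∀ j ∈ Sset D ω, IsSplittingVector D ω j (ξ j)) :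
    (∀ j ∈ Sset D ω, DQcast D j ∈ LtildeDual D ω) ∧
    ∀ v ∈ LtildeDual D ω,
      (∃ w n, GoodDecomp D ω ξ v w n) ∧
      (∀ w n w' n', GoodDecomp D ω ξ v w n → GoodDecomp D ω ξ v w' n' →
        w = w' ∧ ∀ j ∈ Sset D ω, n j = n' j) ∧
      (∀ w n, GoodDecomp D ω ξ v w n →
        ∀ j ∈ Sset D ω, (n j : ℚ) = dotQQ v (ξ j)) := by
  refine ⟨fun j hj => hstar.DQcast_mem_LtildeDual hj, fun v hv =>
    ⟨hstar.exists_goodDecomp hξ hv, ?_, fun w n h j hj => h.coeff_eq hstar hξ hj⟩⟩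
  intro w n w' n' h h'
  have hn : ∀ j ∈ Sset D ω, n j = n' j := fun j hj => by
    exact_mod_cast (h.coeff_eq hstar hξ hj).trans (h'.coeff_eq hstar hξ hj).symm
  have hsum := h.2.2.symm.trans h'.2.2
  rw [Finset.sum_congr rfl fun j hj => by rw [hn j hj], add_left_inj] at hsum
  exact ⟨hsum, hn⟩

/-- Lemma 5.8 of the paper: (a) `D_j ∈ 𝕃̃^∨` for `j ∈ S_ω`; (b) given splitting
vectors `ξ_j` for `j ∈ S_ω`, every `v ∈ 𝕃̃^∨` decomposes uniquely as
`v = w + Σ_{j ∈ S_ω} n_j D_j` with `n_j ∈ ℤ`, `w ∈ 𝕃̃^∨`, `w · ξ_j = 0`;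
moreover necessarily `n_j = v · ξ_j`. -/
theorem lattice_decomposition {r m : ℕ} (hr : 0 < r) (hrm : r ≤ m)
    (D : Fin m → Fin r → ℤ) (ω : Fin r → ℝ) (hstar : AssumptionStar D ω)
    (ξ : Fin m → Fin r → ℚ)
    (hξ : ∀ j ∈ Sset D ω, IsSplittingVector D ω j (ξ j)) :
    (∀ j ∈ Sset D ω, DQcast D j ∈ LtildeDual D ω) ∧
    ∀ v ∈ LtildeDual D ω,
      (∃ w n, GoodDecomp D ω ξ v w n) ∧
      (∀ w n w' n', GoodDecomp D ω ξ v w n → GoodDecomp D ω ξ v w' n' →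
        w = w' ∧ ∀ j ∈ Sset D ω, n j = n' j) ∧
      (∀ w n, GoodDecomp D ω ξ v w n →
        ∀ j ∈ Sset D ω, (n j : ℚ) = dotQQ v (ξ j)) :=
  lattice_decomposition_general D ω hstar ξ hξ

end CTC
end
end

section
/- In the wall-crossing setup, let δ_+ ∈ 𝒜_+ and δ_- ∈ 𝒜_- be minimal anticones that are next to each other, and let j_- be the unique element of δ_- not in δ_+. Then for every j ∈ {1,…,m}: u_j(δ_+) = u_j(δ_-) + (D_j·e / D_{j_-}·e) · u_{j_-}(δ_+), as vectors in ℝ^m. -/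
/- Formalization of a statement from "The Crepant Transformation Conjecture
for Toric Complete Intersections" (Coates–Iritani–Jiang).

GIT data: `𝕃 = ℤ^r` (modelled by `Fin r → ℤ`), characters `D_1, …, D_m ∈ 𝕃^∨`
(modelled by `D : Fin m → Fin r → ℤ`, viewing `𝕃^∨ ⊗ ℝ` as `Fin r → ℝ`). -/

open scoped Classical

noncomputable section

namespace CTC

/-- The standard basis vector `λ_a` of `ℝ^m`. -/
def lamVec {m : ℕ} (a : Fin m) : Fin m → ℝ := Pi.single a 1

/-- `u_j(δ)` written out: `u_j(δ) = λ_j − Σ_{a ∈ δ} c_a λ_a`, where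
`c : Fin m → ℝ` are the coefficients of `D_j` in the basis `{D_a : a ∈ δ}`
and `λ_1, …, λ_m` is the standard basis of `ℝ^m`. -/
def uvec {m : ℕ} (δ : Finset (Fin m)) (c : Fin m → ℝ) (j : Fin m) : Fin m → ℝ :=
  lamVec j - ∑ a ∈ δ, c a • lamVec a

/-!
Pairing the expansion of `D_k` in the basis `δ_-` with `e` kills every term except the one of
`j_-`, because the other elements of `δ_-` lie on the wall; hence the `j_-`-coefficient of `D_j`
is `D_j·e / D_{j_-}·e`. Substituting the `δ_+`-expansion of `D_{j_-}` into the `δ_-`-expansion of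
`D_j` gives a second expansion of `D_j` in the basis `δ_+`, and comparing coefficients yields the
identity between the vectors `u_j`.
-/

open Finset

section LinearAlgebra

variable {ι M : Type*} [DecidableEq ι] [AddCommGroup M] [Module ℝ M]

lemma sum_mul_add_ite_smul {s S : Finset ι} (hS : S ⊆ s) (t : ℝ) (c d : ι → ℝ) (w : ι → M) :
    ∑ a ∈ s, (t * c a + if a ∈ S then d a else 0) • w a
      = t • ∑ a ∈ s, c a • w a + ∑ a ∈ S, d a • w a := by
  simp only [add_smul, ite_smul, zero_smul, mul_smul]
  rw [sum_add_distrib, sum_ite_mem, inter_eq_right.mpr hS, ← smul_sum]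

lemma coeff_eq_of_eq_smul_add_sum {v : ι → M} {δ S : Finset ι} (hli : LinearIndepOn ℝ v δ)
    (hS : S ⊆ δ) {x y : M} {c c' d : ι → ℝ} {t : ℝ}
    (hx : x = ∑ a ∈ δ, c a • v a) (hy : y = ∑ a ∈ δ, c' a • v a)
    (hxy : x = t • y + ∑ a ∈ S, d a • v a) :
    ∀ a ∈ δ, c a = t * c' a + if a ∈ S then d a else 0 :=
  linearIndepOn_finset_iffₛ.1 hli _ _ <| by
    rw [sum_mul_add_ite_smul hS, ← hx, ← hy, hxy]

end LinearAlgebra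

lemma pairR_DR {r m : ℕ} (D : Fin m → Fin r → ℤ) (i : Fin m) (e : Fin r → ℤ) :
    pairR (DR D i) e = (pairZ (D i) e : ℝ) := by
  simp [pairR, pairZ, DR]

lemma pairR_sum {r : ℕ} {ι : Type*} (e : Fin r → ℤ) (s : Finset ι) (c : ι → ℝ)
    (f : ι → Fin r → ℝ) :
    pairR (∑ i ∈ s, c i • f i) e = ∑ i ∈ s, c i * pairR (f i) e := by
  simp only [pairR, Finset.sum_apply, Pi.smul_apply, smul_eq_mul, sum_mul, mul_sum]
  rw [sum_comm]
  exact sum_congr rfl fun i _ => sum_congr rfl fun a _ => by ring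

lemma pairZ_eq_coeff_mul_of_wall {r m : ℕ} {D : Fin m → Fin r → ℤ} {e : Fin r → ℤ}
    {S : Finset (Fin m)} {j k : Fin m} {c : Fin m → ℝ} (hjS : j ∉ S)
    (hwall : ∀ a ∈ S, pairZ (D a) e = 0) (hk : DR D k = ∑ a ∈ insert j S, c a • DR D a) :
    (pairZ (D k) e : ℝ) = c j * pairZ (D j) e := by
  have hpair := congrArg (pairR · e) hk
  simp only [pairR_DR, pairR_sum] at hpair
  rw [hpair, sum_insert hjS,
    sum_eq_zero fun a ha => by rw [hwall a ha, Int.cast_zero, mul_zero], add_zero]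

lemma linearIndepOn_DR_of_card_eq {r m : ℕ} {D : Fin m → Fin r → ℤ} {ω : Fin r → ℝ}
    (hstar : AssumptionStar D ω) {δ : Finset (Fin m)} (hδ : δ ∈ anticones D ω)
    (hcard : δ.card = r) : LinearIndepOn ℝ (DR D) (δ : Set (Fin m)) := by
  refine linearIndependent_of_top_le_span_of_card_eq_finrank ?_ ?_
  · rw [← Set.image_eq_range]
    exact (hstar.2 δ hδ).ge
  · simpa using hcard

lemma uvec_eq_uvec_insert_add_smul {m : ℕ} {δ S : Finset (Fin m)} (hS : S ⊆ δ)
    {k : Fin m} (hkS : k ∉ S) {c c' d : Fin m → ℝ} {t : ℝ}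
    (hcoef : ∀ a ∈ δ, c a = t * c' a + if a ∈ S then d a else 0) (hdk : d k = t) (j : Fin m) :
    uvec δ c j = uvec (insert k S) d j + t • uvec δ c' k := by
  unfold uvec
  rw [sum_congr rfl fun a ha => by rw [hcoef a ha], sum_mul_add_ite_smul hS, sum_insert hkS, hdk]
  module

theorem fixed_point_weights_general {r m : ℕ} (W : WallCrossingSetup r m)
    (δp δm : Finset (Fin m))
    (hδp : δp ∈ anticones W.D W.ωp)
    (hcardp : δp.card = r)
    (jm : Fin m) (hjm : jm ∉ δp)
    (hδmeq : δm = insert jm (δp ∩ δm))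
    (hwall : ∀ j ∈ δp ∩ δm, pairZ (W.D j) W.e = 0)
    (hjme : pairZ (W.D jm) W.e < 0)
    (cp cm : Fin m → Fin m → ℝ)
    (hcp : ∀ j : Fin m, DR W.D j = ∑ a ∈ δp, cp j a • DR W.D a)
    (hcm : ∀ j : Fin m, DR W.D j = ∑ a ∈ δm, cm j a • DR W.D a) :
    ∀ j : Fin m,
      uvec δp (cp j) j
        = uvec δm (cm j) j
            + ((pairZ (W.D j) W.e : ℝ) / (pairZ (W.D jm) W.e : ℝ))
                • uvec δp (cp jm) jm := by
  intro j
  have hjmS : jm ∉ δp ∩ δm := fun h => hjm (mem_inter.1 h).1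
  have hcm' : ∀ k, DR W.D k = ∑ a ∈ insert jm (δp ∩ δm), cm k a • DR W.D a := by
    rw [← hδmeq]; exact hcm
  have hcm_jm : cm j jm = (pairZ (W.D j) W.e : ℝ) / pairZ (W.D jm) W.e := by
    rw [pairZ_eq_coeff_mul_of_wall hjmS hwall (hcm' j),
      mul_div_cancel_right₀ _ (by exact_mod_cast hjme.ne)]
  have hDj : DR W.D j = ((pairZ (W.D j) W.e : ℝ) / pairZ (W.D jm) W.e) • DR W.D jm
      + ∑ a ∈ δp ∩ δm, cm j a • DR W.D a := by
    rw [hcm' j, sum_insert hjmS, hcm_jm]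
  have hcoef := coeff_eq_of_eq_smul_add_sum (linearIndepOn_DR_of_card_eq W.starP hδp hcardp)
    inter_subset_left (hcp j) (hcp jm) hDj
  rw [hδmeq]
  exact uvec_eq_uvec_insert_add_smul inter_subset_left hjmS hcoef hcm_jm j

/-- Lemma 6.8 of the paper: if the minimal anticones `δ_+ ∈ 𝒜_+` and
`δ_- ∈ 𝒜_-` are next to each other and `j_-` is the element of `δ_-` not in
`δ_+`, then for every `j`:
`u_j(δ_+) = u_j(δ_-) + (D_j·e / D_{j_-}·e) · u_{j_-}(δ_+)` in `ℝ^m`. -/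
theorem fixed_point_weights {r m : ℕ} (W : WallCrossingSetup r m)
    (δp δm : Finset (Fin m))
    (hδp : δp ∈ anticones W.D W.ωp) (hδm : δm ∈ anticones W.D W.ωm)
    (hcardp : δp.card = r) (hcardm : δm.card = r)
    (jp jm : Fin m) (hjp : jp ∉ δm) (hjm : jm ∉ δp)
    (hδpeq : δp = insert jp (δp ∩ δm)) (hδmeq : δm = insert jm (δp ∩ δm))
    (hwall : ∀ j ∈ δp ∩ δm, pairZ (W.D j) W.e = 0)
    (hjpe : 0 < pairZ (W.D jp) W.e) (hjme : pairZ (W.D jm) W.e < 0)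
    (cp cm : Fin m → Fin m → ℝ)
    (hcp : ∀ j : Fin m, DR W.D j = ∑ a ∈ δp, cp j a • DR W.D a)
    (hcm : ∀ j : Fin m, DR W.D j = ∑ a ∈ δm, cm j a • DR W.D a) :
    ∀ j : Fin m,
      uvec δp (cp j) j
        = uvec δm (cm j) j
            + ((pairZ (W.D j) W.e : ℝ) / (pairZ (W.D jm) W.e : ℝ))
                • uvec δp (cp jm) jm :=
  fixed_point_weights_general W δp δm hδp hcardp jm hjm hδmeq hwall hjme cp cm hcp hcm

end CTC
end
end

section
/- In the wall-crossing setup, let δ_+ ∈ 𝒜_+ and δ_- ∈ 𝒜_- be minimal anticones that are next to each other, and let j_- be the unique element of δ_- not in δ_+. Then for every p ∈ 𝕃^∨⊗ℝ: i_{δ_+}^⋆θ(p) = i_{δ_-}^⋆θ(p) + (p·e / D_{j_-}·e) · u_{j_-}(δ_+), as vectors in ℝ^m. -/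
/- Formalization of a statement from "The Crepant Transformation Conjecture
for Toric Complete Intersections" (Coates–Iritani–Jiang).

GIT data: `𝕃 = ℤ^r` (modelled by `Fin r → ℤ`), characters `D_1, …, D_m ∈ 𝕃^∨`
(modelled by `D : Fin m → Fin r → ℤ`, viewing `𝕃^∨ ⊗ ℝ` as `Fin r → ℝ`). -/

open scoped Classical

noncomputable section

namespace CTC

/-- `i_δ^⋆ θ(p) := −Σ_{a ∈ δ} c_a λ_a`, where `c : Fin m → ℝ` are the
coefficients of `p` in the basis `{D_a : a ∈ δ}` and `λ_1, …, λ_m` is the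
standard basis of `ℝ^m`. -/
def ithetavec {m : ℕ} (δ : Finset (Fin m)) (c : Fin m → ℝ) : Fin m → ℝ :=
  -(∑ a ∈ δ, c a • lamVec a)

/-! Since `δ_-` is `δ_+` with one element exchanged for `j_-`, substituting the `δ_+`-expansion
of `D_{j_-}` into the `δ_-`-expansion of `p` re-expands `p` in the basis `δ_+`. Uniqueness of
coordinates gives `c_a(p, δ_+) = c_{j_-}(p, δ_-) c_a(D_{j_-}, δ_+) + [a ∈ δ_-] c_a(p, δ_-)` for
`a ∈ δ_+`, and pairing the `δ_-`-expansion with `e` gives `c_{j_-}(p, δ_-) = p·e / D_{j_-}·e`,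
as every other element of `δ_-` lies on the wall. -/

end CTC

theorem Finset.sum_mul_add_indicator_smul {ι R M : Type*} [Semiring R] [AddCommMonoid M]
    [Module R M] {δ S : Finset ι} (hS : S ⊆ δ) (t : R) (d c : ι → R) (v : ι → M) :
    ∑ a ∈ δ, (t * d a + (S : Set ι).indicator c a) • v a
      = t • ∑ a ∈ δ, d a • v a + ∑ a ∈ S, c a • v a := by
  simp only [add_smul, mul_smul, Finset.sum_add_distrib, Finset.smul_sum,
    ← Set.indicator_smul_apply_left, Finset.sum_indicator_subset _ hS]

theorem LinearIndepOn.eq_mul_add_indicator_of_sum_insert {ι R M : Type*} [DecidableEq ι]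
    [Semiring R] [AddCommMonoid M] [Module R M] {v : ι → M} {δ S : Finset ι}
    (hv : LinearIndepOn R v δ) (hS : S ⊆ δ) {j : ι} (hj : j ∉ S) {c c' d : ι → R} (hd : v j = ∑ a ∈ δ, d a • v a)
    (hc : ∑ a ∈ δ, c a • v a = ∑ a ∈ insert j S, c' a • v a) :
    ∀ a ∈ δ, c a = c' j * d a + (S : Set ι).indicator c' a :=
  linearIndepOn_finset_iffₛ.mp hv _ _ <| by
    rw [hc, Finset.sum_insert hj, hd, Finset.sum_mul_add_indicator_smul hS]

namespace CTC

theorem AssumptionStar.linearIndepOn {r m : ℕ} {D : Fin m → Fin r → ℤ} {ω : Fin r → ℝ}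
    (h : AssumptionStar D ω) {δ : Finset (Fin m)} (hδ : δ ∈ anticones D ω) (hcard : δ.card = r) :
    LinearIndepOn ℝ (DR D) (δ : Set (Fin m)) :=
  linearIndependent_of_top_le_span_of_card_eq_finrank
    (by rw [← Set.image_eq_range, h.2 δ hδ]) (by simp [hcard])

theorem pairR_sum_smul_DR {r m : ℕ} (D : Fin m → Fin r → ℤ) (e : Fin r → ℤ)
    (s : Finset (Fin m)) (c : Fin m → ℝ) :
    pairR (∑ a ∈ s, c a • DR D a) e = ∑ a ∈ s, c a * (pairZ (D a) e : ℝ) := by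
  simp only [pairR, pairZ, DR, Finset.sum_apply, Pi.smul_apply, smul_eq_mul, Finset.sum_mul,
    Int.cast_sum, Int.cast_mul, Finset.mul_sum, mul_assoc]
  exact Finset.sum_comm

theorem ithetavec_eq_of_coeff_eq {m : ℕ} {δ S : Finset (Fin m)} (hS : S ⊆ δ) {j : Fin m}
    (hj : j ∉ S) {c c' d : Fin m → ℝ}
    (hc : ∀ a ∈ δ, c a = c' j * d a + (S : Set (Fin m)).indicator c' a) :
    ithetavec δ c = ithetavec (insert j S) c' + c' j • (lamVec j + ithetavec δ d) := by
  have hsum : ∑ a ∈ δ, c a • lamVec a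
      = c' j • ∑ a ∈ δ, d a • lamVec a + ∑ a ∈ S, c' a • lamVec a := by
    rw [← Finset.sum_mul_add_indicator_smul hS]
    exact Finset.sum_congr rfl fun a ha => by rw [hc a ha]
  simp only [ithetavec, Finset.sum_insert hj, hsum]
  module

theorem fixed_point_theta_restriction_general {r m : ℕ} (W : WallCrossingSetup r m)
    (δp δm : Finset (Fin m))
    (hδp : δp ∈ anticones W.D W.ωp)
    (hcardp : δp.card = r)
    (jm : Fin m) (hjm : jm ∉ δp)
    (hδmeq : δm = insert jm (δp ∩ δm))
    (hwall : ∀ j ∈ δp ∩ δm, pairZ (W.D j) W.e = 0)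
    (hjme : pairZ (W.D jm) W.e < 0)
    (p : Fin r → ℝ) (cP cM djm : Fin m → ℝ)
    (hcP : p = ∑ a ∈ δp, cP a • DR W.D a)
    (hcM : p = ∑ a ∈ δm, cM a • DR W.D a)
    (hdjm : DR W.D jm = ∑ a ∈ δp, djm a • DR W.D a) :
    ithetavec δp cP
      = ithetavec δm cM
          + (pairR p W.e / (pairZ (W.D jm) W.e : ℝ))
              • (lamVec jm + ithetavec δp djm) := by
  set S := δp ∩ δm
  have hSp : S ⊆ δp := Finset.inter_subset_left
  have hjmS : jm ∉ S := fun h => hjm (hSp h)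
  have hpe : pairR p W.e = cM jm * pairZ (W.D jm) W.e := by
    rw [hcM, hδmeq, pairR_sum_smul_DR, Finset.sum_insert hjmS,
      Finset.sum_eq_zero fun a ha => by rw [hwall a ha, Int.cast_zero, mul_zero], add_zero]
  have hratio : pairR p W.e / (pairZ (W.D jm) W.e : ℝ) = cM jm := by
    rw [hpe, mul_div_cancel_right₀ _ (by exact_mod_cast hjme.ne)]
  have hcoeff : ∀ a ∈ δp, cP a = cM jm * djm a + (S : Set (Fin m)).indicator cM a :=
    (W.starP.linearIndepOn hδp hcardp).eq_mul_add_indicator_of_sum_insert hSp hjmS hdjm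
      (by rw [← hcP, hcM, hδmeq])
  rw [hratio, hδmeq]
  exact ithetavec_eq_of_coeff_eq hSp hjmS hcoeff

/-- Equation (6.9) of the paper: if the minimal anticones `δ_+ ∈ 𝒜_+` and
`δ_- ∈ 𝒜_-` are next to each other and `j_-` is the element of `δ_-` not in
`δ_+`, then for every `p ∈ 𝕃^∨ ⊗ ℝ`:
`i_{δ_+}^⋆θ(p) = i_{δ_-}^⋆θ(p) + (p·e / D_{j_-}·e) · u_{j_-}(δ_+)` in `ℝ^m`. -/
theorem fixed_point_theta_restriction {r m : ℕ} (W : WallCrossingSetup r m)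
    (δp δm : Finset (Fin m))
    (hδp : δp ∈ anticones W.D W.ωp) (hδm : δm ∈ anticones W.D W.ωm)
    (hcardp : δp.card = r) (hcardm : δm.card = r)
    (jp jm : Fin m) (hjp : jp ∉ δm) (hjm : jm ∉ δp)
    (hδpeq : δp = insert jp (δp ∩ δm)) (hδmeq : δm = insert jm (δp ∩ δm))
    (hwall : ∀ j ∈ δp ∩ δm, pairZ (W.D j) W.e = 0)
    (hjpe : 0 < pairZ (W.D jp) W.e) (hjme : pairZ (W.D jm) W.e < 0)
    (p : Fin r → ℝ) (cP cM djm : Fin m → ℝ)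
    (hcP : p = ∑ a ∈ δp, cP a • DR W.D a)
    (hcM : p = ∑ a ∈ δm, cM a • DR W.D a)
    (hdjm : DR W.D jm = ∑ a ∈ δp, djm a • DR W.D a) :
    ithetavec δp cP
      = ithetavec δm cM
          + (pairR p W.e / (pairZ (W.D jm) W.e : ℝ))
              • (lamVec jm + ithetavec δp djm) :=
  fixed_point_theta_restriction_general W δp δm hδp hcardp jm hjm hδmeq hwall hjme p cP cM djm hcP
    hcM hdjm

end CTC
end
end

section
/- Let m ≥ 1 and e_1,…,e_m ∈ ℤ with e_1 + ⋯ + e_m = 0, and let c_1,…,c_m ∈ ℂ be such that c_j + k·e_j + ν ≠ 0 for every j with e_j > 0, every integer k ≥ 0, and every integer ν with 1 ≤ ν ≤ e_j. Define t_0 := 1 and, for each k ≥ 0, t_{k+1} := t_k · (∏_{j : e_j < 0} ∏_{ν=0}^{−e_j−1} (c_j + k·e_j − ν)) / (∏_{j : e_j > 0} ∏_{ν=1}^{e_j} (c_j + k·e_j + ν)). Then the power series Σ_{k≥0} t_k x^k has radius of convergence at least ∏_{j : e_j ≠ 0} |e_j|^{e_j}, which is a positive real number; in particular the series converges for every complex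 x with |x| < ∏_{j : e_j ≠ 0} |e_j|^{e_j}. -/
/- The ratio of consecutive coefficients is a quotient of two polynomials in `k` whose
degrees `Σ_{e_j<0} |e_j|` and `Σ_{e_j>0} e_j` agree because `Σ e_j = 0`; it therefore tends
to the quotient of the leading coefficients, `∏_{e_j<0} e_j^{-e_j} / ∏_{e_j>0} e_j^{e_j}`,
whose modulus is `(∏_{e_j ≠ 0} |e_j|^{e_j})⁻¹`. The ratio test does the rest. -/

noncomputable section

namespace CTC

open Filter Topology Finset

theorem tendsto_add_natCast_mul_div_natCast {𝕜 : Type*} [RCLike 𝕜] (a b : 𝕜) :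
    Tendsto (fun k : ℕ => (a + k * b) / k) atTop (𝓝 b) := by
  have h : Tendsto (fun k : ℕ => a * (k : 𝕜)⁻¹ + b) atTop (𝓝 b) := by
    simpa using (tendsto_inv_atTop_nhds_zero_nat.const_mul a).add_const b
  refine h.congr' ?_
  filter_upwards [eventually_ne_atTop 0] with k hk
  field_simp

theorem tendsto_prod_prod_range_div_pow {𝕜 ι : Type*} [Field 𝕜] [TopologicalSpace 𝕜]
    [ContinuousMul 𝕜] {s : Finset ι} {n : ι → ℕ} {f : ι → ℕ → ℕ → 𝕜} {b : ι → 𝕜}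
    (hf : ∀ i ∈ s, ∀ ν ∈ range (n i), Tendsto (fun k => f i ν k / k) atTop (𝓝 (b i))) :
    Tendsto (fun k : ℕ => (∏ i ∈ s, ∏ ν ∈ range (n i), f i ν k) / (k : 𝕜) ^ ∑ i ∈ s, n i)
      atTop (𝓝 (∏ i ∈ s, b i ^ n i)) := by
  have h := tendsto_finsetProd s fun i hi => tendsto_finsetProd _ (hf i hi)
  simp only [prod_div_distrib, prod_const, card_range, prod_pow_eq_pow_sum] at h
  exact h

theorem summable_mul_pow_of_tendsto_norm_ratio {𝕜 : Type*} [NormedDivisionRing 𝕜]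
    [CompleteSpace 𝕜] {t ρ : ℕ → 𝕜} {l : ℝ} {x : 𝕜} (ht : ∀ k, t (k + 1) = t k * ρ k)
    (hρ : Tendsto (fun k => ‖ρ k‖) atTop (𝓝 l)) (hx : ‖x‖ * l < 1) :
    Summable fun k => t k * x ^ k := by
  obtain ⟨r, hxr, hr⟩ := exists_between hx
  refine summable_of_ratio_norm_eventually_le hr ?_
  filter_upwards [(hρ.const_mul ‖x‖).eventually (gt_mem_nhds hxr)] with k hk
  calc ‖t (k + 1) * x ^ (k + 1)‖ = ‖x‖ * ‖ρ k‖ * ‖t k * x ^ k‖ := by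
        simp only [ht, norm_mul, norm_pow, pow_succ]; ring
    _ ≤ r * ‖t k * x ^ k‖ := by gcongr

theorem sum_toNat_neg_eq_sum_toNat {ι : Type*} {s : Finset ι} {e : ι → ℤ}
    (hsum : ∑ j ∈ s, e j = 0) : ∑ j ∈ s, (-e j).toNat = ∑ j ∈ s, (e j).toNat := by
  have h : ∑ j ∈ s, (((e j).toNat : ℤ) - (-e j).toNat) = 0 := by
    simpa only [Int.toNat_sub_toNat_neg] using hsum
  rw [sum_sub_distrib, sub_eq_zero] at h
  exact_mod_cast h.symm

theorem abs_intCast_zpow_self (n : ℤ) :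
    |(n : ℝ)| ^ n = |(n : ℝ)| ^ n.toNat / |(n : ℝ)| ^ (-n).toNat := by
  rcases le_total 0 n with hn | hn
  · lift n to ℕ using hn
    simp
  · obtain ⟨m, rfl⟩ := Int.exists_eq_neg_ofNat hn
    simp [zpow_neg]

theorem prod_filter_prod_range_of_ne_zero {ι M : Type*} [CommMonoid M] {s : Finset ι}
    {p : ι → Prop} [DecidablePred p] {n : ι → ℕ} (f : ι → ℕ → M)
    (hp : ∀ i ∈ s, n i ≠ 0 → p i) :
    ∏ i ∈ s with p i, ∏ ν ∈ range (n i), f i ν = ∏ i ∈ s, ∏ ν ∈ range (n i), f i ν :=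
  prod_filter_of_ne fun i hi hf => hp i hi fun h => hf (by simp [h])

def coeffRatio {ι : Type*} [Fintype ι] (e : ι → ℤ) (c : ι → ℂ) (k : ℕ) : ℂ :=
  (∏ j, ∏ ν ∈ range (-e j).toNat, (c j + k * e j - ν)) /
    ∏ j, ∏ ν ∈ range (e j).toNat, (c j + k * e j + (ν + 1))

theorem tendsto_norm_coeffRatio {ι : Type*} [Fintype ι] {e : ι → ℤ} (hsum : ∑ j, e j = 0)
    (c : ι → ℂ) :
    Tendsto (fun k => ‖coeffRatio e c k‖) atTop (𝓝 (∏ j, |(e j : ℝ)| ^ e j)⁻¹) := by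
  have hnum : Tendsto (fun k : ℕ => (∏ j, ∏ ν ∈ range (-e j).toNat, (c j + k * e j - ν)) /
      (k : ℂ) ^ ∑ j, (e j).toNat) atTop (𝓝 (∏ j, (e j : ℂ) ^ (-e j).toNat)) := by
    rw [← sum_toNat_neg_eq_sum_toNat hsum]
    exact tendsto_prod_prod_range_div_pow fun j _ ν _ =>
      (tendsto_add_natCast_mul_div_natCast (c j - ν) (e j)).congr fun k => by ring
  have hden : Tendsto (fun k : ℕ => (∏ j, ∏ ν ∈ range (e j).toNat, (c j + k * e j + (ν + 1))) /
      (k : ℂ) ^ ∑ j, (e j).toNat) atTop (𝓝 (∏ j, (e j : ℂ) ^ (e j).toNat)) :=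
    tendsto_prod_prod_range_div_pow fun j _ ν _ =>
      (tendsto_add_natCast_mul_div_natCast (c j + (ν + 1)) (e j)).congr fun k => by ring
  have hden_ne : ∏ j, (e j : ℂ) ^ (e j).toNat ≠ 0 := by
    refine prod_ne_zero_iff.2 fun j _ => ?_
    rcases eq_or_ne (e j) 0 with h | h
    · simp [h]
    · exact pow_ne_zero _ (by exact_mod_cast h)
  have hlim : ‖(∏ j, (e j : ℂ) ^ (-e j).toNat) / ∏ j, (e j : ℂ) ^ (e j).toNat‖ =
      (∏ j, |(e j : ℝ)| ^ e j)⁻¹ := by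
    simp only [norm_div, norm_prod, norm_pow, Complex.norm_intCast, abs_intCast_zpow_self,
      prod_div_distrib, inv_div]
  rw [← hlim]
  refine (hnum.div hden hden_ne).norm.congr' ?_
  filter_upwards [eventually_ne_atTop 0] with k hk
  rw [Pi.div_apply, coeffRatio, div_div_div_cancel_right₀ (pow_ne_zero _ (Nat.cast_ne_zero.2 hk))]

theorem I_function_radius_of_convergence_general
    (m : ℕ) (e : Fin m → ℤ) (hsum : (∑ j, e j) = 0)
    (c : Fin m → ℂ)
    (t : ℕ → ℂ)
    (htrec : ∀ k : ℕ, t (k + 1) = t k *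
      (∏ j ∈ Finset.univ.filter (fun j => e j < 0),
        ∏ ν ∈ Finset.range (-(e j)).toNat,
          (c j + (k : ℂ) * (e j : ℂ) - (ν : ℂ))) /
      (∏ j ∈ Finset.univ.filter (fun j => 0 < e j),
        ∏ ν ∈ Finset.range (e j).toNat,
          (c j + (k : ℂ) * (e j : ℂ) + ((ν : ℂ) + 1)))) :
    0 < (∏ j ∈ Finset.univ.filter (fun j => e j ≠ 0), |(e j : ℝ)| ^ (e j)) ∧
    ∀ x : ℂ,
      ‖x‖
          < (∏ j ∈ Finset.univ.filter (fun j => e j ≠ 0), |(e j : ℝ)| ^ (e j)) →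
      Summable (fun k : ℕ => t k * x ^ k) := by
  have hC : ∏ j ∈ univ.filter (fun j => e j ≠ 0), |(e j : ℝ)| ^ e j = ∏ j, |(e j : ℝ)| ^ e j :=
    prod_filter_of_ne fun j _ h hj => h (by simp [hj])
  have hC_pos : 0 < ∏ j ∈ univ.filter (fun j => e j ≠ 0), |(e j : ℝ)| ^ e j :=
    prod_pos fun j hj => zpow_pos (abs_pos.2 (by exact_mod_cast (mem_filter.1 hj).2)) _
  have hrec : ∀ k, t (k + 1) = t k * coeffRatio e c k := fun k => by
    rw [htrec, mul_div_assoc, prod_filter_prod_range_of_ne_zero, prod_filter_prod_range_of_ne_zero,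
      coeffRatio] <;> intro j _ hj <;> omega
  refine ⟨hC_pos, fun x hx => summable_mul_pow_of_tendsto_norm_ratio hrec
    (tendsto_norm_coeffRatio hsum c) ?_⟩
  rwa [← div_eq_mul_inv, div_lt_one (hC ▸ hC_pos), ← hC]

theorem I_function_radius_of_convergence
    (m : ℕ) (hm : 1 ≤ m) (e : Fin m → ℤ) (hsum : (∑ j, e j) = 0)
    (c : Fin m → ℂ)
    (hc : ∀ j : Fin m, 0 < e j → ∀ k : ℕ, ∀ ν : ℤ, 1 ≤ ν → ν ≤ e j →
      c j + (k : ℂ) * (e j : ℂ) + (ν : ℂ) ≠ 0)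
    (t : ℕ → ℂ) (ht0 : t 0 = 1)
    (htrec : ∀ k : ℕ, t (k + 1) = t k *
      (∏ j ∈ Finset.univ.filter (fun j => e j < 0),
        ∏ ν ∈ Finset.range (-(e j)).toNat,
          (c j + (k : ℂ) * (e j : ℂ) - (ν : ℂ))) /
      (∏ j ∈ Finset.univ.filter (fun j => 0 < e j),
        ∏ ν ∈ Finset.range (e j).toNat,
          (c j + (k : ℂ) * (e j : ℂ) + ((ν : ℂ) + 1)))) :
    0 < (∏ j ∈ Finset.univ.filter (fun j => e j ≠ 0), |(e j : ℝ)| ^ (e j)) ∧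
    ∀ x : ℂ,
      ‖x‖
          < (∏ j ∈ Finset.univ.filter (fun j => e j ≠ 0), |(e j : ℝ)| ^ (e j)) →
      Summable (fun k : ℕ => t k * x ^ k) :=
  I_function_radius_of_convergence_general m e hsum c t htrec

end CTC
end
end

section
/- Let r ≥ 1, e ∈ ℤ^r, let D'_1, …, D'_r ∈ ℤ^r be characters (those indexed by a minimal anticone δ_+), and let D_- ∈ ℤ^r with l := −(D_-·e) > 0. Define subgroups G := {h ∈ (ℂˣ)^r : χ_{D'_a}(h) = 1 for a = 1,…,r} of (ℂˣ)^r, and G̃ := {(g,λ) ∈ (ℂˣ)^r × ℂˣ : χ_{D'_a}(g)·λ^{−D'_a·e} = 1 for a = 1,…,r, and χ_{D_-}(g) = 1}. Then the map φ : G̃ → (ℂˣ)^r, φ(g,λ) := g·λ^{−e} (componentwise product), is a group homomorphism whose image is exactly G and whose kernel is {(λ^e, λ) : λ ∈ ℂˣ, λ^l = 1}; moreover this kernel is isomorphic to the cyclic group ℤ/lℤ of l-th roots of unity. -/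
/- Formalization of the group-theoretic content of Proposition 6.12(1) of
"The Crepant Transformation Conjecture for Toric Complete Intersections":
the isotropy group of a torus-fixed point of the common blow-up `X̃` is a
`μ_l`-extension of the isotropy group of the corresponding fixed point of
`X_+`. -/

noncomputable section

namespace CTC

/-- The character `χ_D : (ℂˣ)^r → ℂˣ`, `χ_D(g) := Π_a g_a^{D_a}`. -/
def chiD {r : ℕ} (Dv : Fin r → ℤ) (g : Fin r → ℂˣ) : ℂˣ := ∏ a, g a ^ Dv a

/-- The map `φ(g, λ) := g · λ^{−e}` (componentwise product). -/
def phiMap {r : ℕ} (e : Fin r → ℤ) (p : (Fin r → ℂˣ) × ℂˣ) : Fin r → ℂˣ :=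
  fun i => p.1 i * p.2 ^ (-e i)

/-- `G := { h ∈ (ℂˣ)^r : χ_{D'_a}(h) = 1 for all a }`. -/
def Gset {r : ℕ} (D' : Fin r → Fin r → ℤ) : Set (Fin r → ℂˣ) :=
  { h | ∀ a, chiD (D' a) h = 1 }

/-- `G̃ := { (g,λ) : χ_{D'_a}(g) λ^{−D'_a·e} = 1 for all a, and χ_{D_-}(g) = 1 }`. -/
def GtSet {r : ℕ} (D' : Fin r → Fin r → ℤ) (Dm e : Fin r → ℤ) :
    Set ((Fin r → ℂˣ) × ℂˣ) :=
  { p | (∀ a, chiD (D' a) p.1 * p.2 ^ (-(∑ b, D' a b * e b)) = 1) ∧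
      chiD Dm p.1 = 1 }

/-- The kernel of `φ` restricted to `G̃`. -/
def kerSet {r : ℕ} (D' : Fin r → Fin r → ℤ) (Dm e : Fin r → ℤ) :
    Set ((Fin r → ℂˣ) × ℂˣ) :=
  { p | p ∈ GtSet D' Dm e ∧ phiMap e p = 1 }

/-! The kernel of `φ` consists of the points with `g = λ^e`; the condition `χ_{D'_a}(g) λ^{-D'_a·e} = 1`
is then automatic, and `χ_{D_-}(λ^e) = λ^{D_-·e} = λ^{-l}` forces `λ^l = 1`. Since
`χ_{D'_a}(φ(g, λ)) = χ_{D'_a}(g) λ^{-D'_a·e}`, the image of `G̃` lies in `G`; and `h ∈ G` is hit by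
`(h λ^e, λ)` for any `l`-th root `λ` of `χ_{D_-}(h)`, which exists because `ℂ` is algebraically closed.
Finally `μ_l ⊂ ℂˣ` is cyclic of order `l`, hence isomorphic to `ℤ/lℤ`. -/

theorem prod_zpow_eq_zpow_sum {ι G : Type*} [CommGroup G] (s : Finset ι) (f : ι → ℤ) (c : G) :
    ∏ i ∈ s, c ^ f i = c ^ (∑ i ∈ s, f i) := by
  classical
  induction s using Finset.induction with
  | empty => simp
  | insert _ _ h ih => rw [Finset.prod_insert h, Finset.sum_insert h, zpow_add, ih]

theorem exists_units_pow_eq {k : Type*} [Field k] [IsAlgClosed k] (u : kˣ) {n : ℕ} (hn : 0 < n) :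
    ∃ v : kˣ, v ^ n = u := by
  obtain ⟨z, hz⟩ := IsAlgClosed.exists_pow_nat_eq (u : k) hn
  have hz0 : z ≠ 0 := by
    rintro rfl
    exact u.ne_zero (by rw [← hz, zero_pow hn.ne'])
  exact ⟨Units.mk0 z hz0, Units.ext (by simpa using hz)⟩

def cocharacter {r : ℕ} (e : Fin r → ℤ) : ℂˣ →* (Fin r → ℂˣ) × ℂˣ :=
  (MonoidHom.pi fun i => zpowGroupHom (e i)).prod (MonoidHom.id ℂˣ)

@[simp]
theorem cocharacter_apply {r : ℕ} (e : Fin r → ℤ) (ζ : ℂˣ) :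
    cocharacter e ζ = (fun i => ζ ^ e i, ζ) :=
  rfl

theorem cocharacter_injective {r : ℕ} (e : Fin r → ℤ) : Function.Injective (cocharacter e) :=
  fun _ _ h => congrArg Prod.snd h

section Characters

variable {r : ℕ}

theorem chiD_mul (Dv : Fin r → ℤ) (g h : Fin r → ℂˣ) :
    chiD Dv (g * h) = chiD Dv g * chiD Dv h := by
  simp only [chiD, Pi.mul_apply, mul_zpow, Finset.prod_mul_distrib]

theorem chiD_zpow (Dv e : Fin r → ℤ) (lam : ℂˣ) :
    chiD Dv (fun i => lam ^ e i) = lam ^ (∑ b, Dv b * e b) := by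
  simp only [chiD, ← zpow_mul, prod_zpow_eq_zpow_sum, mul_comm (e _)]

theorem phiMap_eq (e : Fin r → ℤ) (p : (Fin r → ℂˣ) × ℂˣ) :
    phiMap e p = p.1 * fun i => p.2 ^ (-e i) :=
  rfl

theorem phiMap_mul (e : Fin r → ℤ) (p q : (Fin r → ℂˣ) × ℂˣ) :
    phiMap e (p * q) = phiMap e p * phiMap e q := by
  funext i
  simp only [phiMap, Prod.fst_mul, Prod.snd_mul, Pi.mul_apply, mul_zpow, mul_mul_mul_comm]

theorem chiD_phiMap (Dv e : Fin r → ℤ) (p : (Fin r → ℂˣ) × ℂˣ) :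
    chiD Dv (phiMap e p) = chiD Dv p.1 * p.2 ^ (-(∑ b, Dv b * e b)) := by
  simp only [phiMap_eq, chiD_mul, chiD_zpow, mul_neg, Finset.sum_neg_distrib]

theorem phiMap_eq_one_iff (e : Fin r → ℤ) (p : (Fin r → ℂˣ) × ℂˣ) :
    phiMap e p = 1 ↔ p = cocharacter e p.2 := by
  simp only [phiMap_eq, mul_eq_one_iff_eq_inv, Prod.ext_iff, cocharacter_apply, and_true]
  simp only [funext_iff, Pi.inv_apply, zpow_neg, inv_inv]

end Characters

section Isotropy

variable {r : ℕ} {e : Fin r → ℤ} {D' : Fin r → Fin r → ℤ} {Dm : Fin r → ℤ} {l : ℕ}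

theorem cocharacter_mem_kerSet_iff (hDe : (∑ a, Dm a * e a) = -(l : ℤ)) (ζ : ℂˣ) :
    cocharacter e ζ ∈ kerSet D' Dm e ↔ ζ ^ l = 1 := by
  have hphi : phiMap e (cocharacter e ζ) = 1 := (phiMap_eq_one_iff e _).2 rfl
  have hD' : ∀ a, chiD (D' a) (cocharacter e ζ).1 * ζ ^ (-(∑ b, D' a b * e b)) = 1 := fun a => by
    rw [cocharacter_apply, chiD_zpow, ← zpow_add, add_neg_cancel, zpow_zero]
  have hDm : chiD Dm (cocharacter e ζ).1 = (ζ ^ l)⁻¹ := by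
    rw [cocharacter_apply, chiD_zpow, hDe, zpow_neg, zpow_natCast]
  exact ⟨fun h => inv_eq_one.1 (hDm ▸ h.1.2), fun h => ⟨⟨hD', by rw [hDm, h, inv_one]⟩, hphi⟩⟩

theorem mem_kerSet_iff (hDe : (∑ a, Dm a * e a) = -(l : ℤ)) (p : (Fin r → ℂˣ) × ℂˣ) :
    p ∈ kerSet D' Dm e ↔ ∃ ζ : ℂˣ, ζ ^ l = 1 ∧ p = cocharacter e ζ := by
  constructor
  · intro hp
    have hp_eq : p = cocharacter e p.2 := (phiMap_eq_one_iff e p).1 hp.2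
    exact ⟨p.2, (cocharacter_mem_kerSet_iff hDe _).1 (hp_eq ▸ hp), hp_eq⟩
  · rintro ⟨ζ, hζ, rfl⟩
    exact (cocharacter_mem_kerSet_iff hDe ζ).2 hζ

theorem phiMap_image_GtSet (hl : 0 < l) (hDe : (∑ a, Dm a * e a) = -(l : ℤ)) :
    phiMap e '' GtSet D' Dm e = Gset D' := by
  ext h
  constructor
  · rintro ⟨p, hp, rfl⟩ a
    rw [chiD_phiMap]
    exact hp.1 a
  · intro hh
    obtain ⟨lam, hlam⟩ := exists_units_pow_eq (chiD Dm h) hl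
    refine ⟨(h * fun i => lam ^ e i, lam), ⟨fun a => ?_, ?_⟩, ?_⟩
    · rw [chiD_mul, hh a, chiD_zpow, one_mul, ← zpow_add, add_neg_cancel, zpow_zero]
    · rw [chiD_mul, chiD_zpow, hDe, zpow_neg, zpow_natCast, hlam, mul_inv_cancel]
    · funext i
      simp [phiMap, mul_assoc]

end Isotropy

theorem gerbe_isotropy_extension_general
    (r : ℕ) (e : Fin r → ℤ)
    (D' : Fin r → Fin r → ℤ) (Dm : Fin r → ℤ)
    (l : ℕ) (hl : 0 < l) (hDe : (∑ a, Dm a * e a) = -(l : ℤ)) :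
    (∀ p q : (Fin r → ℂˣ) × ℂˣ, phiMap e (p * q) = phiMap e p * phiMap e q) ∧
    phiMap e '' GtSet D' Dm e = Gset D' ∧
    kerSet D' Dm e
      = { p | ∃ ζ : ℂˣ, ζ ^ l = 1 ∧ p = (fun i => ζ ^ e i, ζ) } ∧
    ∃ ψ : ZMod l → (Fin r → ℂˣ) × ℂˣ,
      Function.Injective ψ ∧
      (∀ a, ψ a ∈ kerSet D' Dm e) ∧
      (∀ x ∈ kerSet D' Dm e, ∃ a, ψ a = x) ∧
      (∀ a b, ψ (a + b) = ψ a * ψ b) := by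
  have : NeZero l := ⟨hl.ne'⟩
  let μ : Multiplicative (ZMod l) ≃* rootsOfUnity l ℂ :=
    mulEquivOfCyclicCardEq (by rw [Complex.card_rootsOfUnity]; exact Nat.card_zmod l)
  let ψ : ZMod l → (Fin r → ℂˣ) × ℂˣ := fun a => cocharacter e (μ (.ofAdd a))
  have hψ_mem : ∀ a, ψ a ∈ kerSet D' Dm e := fun a =>
    (cocharacter_mem_kerSet_iff hDe _).2 (μ (.ofAdd a)).2
  refine ⟨phiMap_mul e, phiMap_image_GtSet hl hDe,
    Set.ext fun p => mem_kerSet_iff hDe p, ψ, ?_, hψ_mem, ?_, fun a b => ?_⟩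
  · exact (cocharacter_injective e).comp <| Subtype.val_injective.comp <|
      μ.injective.comp Multiplicative.ofAdd.injective
  · intro x hx
    obtain ⟨ζ, hζ, rfl⟩ := (mem_kerSet_iff hDe x).1 hx
    refine ⟨(μ.symm ⟨ζ, hζ⟩).toAdd, ?_⟩
    simp [ψ]
  · simp only [ψ, ofAdd_add, map_mul, Subgroup.coe_mul]

/-- Proposition 6.12(1): `φ : G̃ → (ℂˣ)^r`, `φ(g,λ) = g·λ^{−e}`, is a group
homomorphism with image exactly `G` and kernel `{(λ^e, λ) : λ^l = 1}`, which
is isomorphic to the cyclic group `ℤ/lℤ` of `l`-th roots of unity. -/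
theorem gerbe_isotropy_extension
    (r : ℕ) (hr : 0 < r) (e : Fin r → ℤ)
    (D' : Fin r → Fin r → ℤ) (Dm : Fin r → ℤ)
    (l : ℕ) (hl : 0 < l) (hDe : (∑ a, Dm a * e a) = -(l : ℤ)) :
    (∀ p q : (Fin r → ℂˣ) × ℂˣ, phiMap e (p * q) = phiMap e p * phiMap e q) ∧
    phiMap e '' GtSet D' Dm e = Gset D' ∧
    kerSet D' Dm e
      = { p | ∃ ζ : ℂˣ, ζ ^ l = 1 ∧ p = (fun i => ζ ^ e i, ζ) } ∧
    ∃ ψ : ZMod l → (Fin r → ℂˣ) × ℂˣ,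
      Function.Injective ψ ∧
      (∀ a, ψ a ∈ kerSet D' Dm e) ∧
      (∀ x ∈ kerSet D' Dm e, ∃ a, ψ a = x) ∧
      (∀ a b, ψ (a + b) = ψ a * ψ b) :=
  gerbe_isotropy_extension_general r e D' Dm l hl hDe

end CTC
end
end
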